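/- Suppose there exists ε > 0 such that det Q(z) ≠ 0 for every z ∈ ℂ with Re(z) ≥ −ε. Then: (1) the matrix polynomial z ↦ Q(z)(z·I_n − η₀) − P(z) has degree at most p − 2; and (2) sup_{x > −ε} ∫_ℝ ‖(x+iy)·I_n − η₀ − Q(x+iy)^{−1}P(x+iy)‖² dy < ∞. -/

import Mathlib

open MeasureTheory Matrix Complex Set

noncomputable section

/-- Euclidean norm on `Fin n → ℝ`. -/
def euclNorm {n : ℕ} (v : Fin n → ℝ) : ℝ := Real.sqrt (∑ i, v i ^ 2)

/-- Frobenius norm of a real square matrix. -/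
def frobR {n : ℕ} (A : Matrix (Fin n) (Fin n) ℝ) : ℝ := Real.sqrt (∑ i, ∑ j, A i j ^ 2)

/-- Frobenius norm of a complex square matrix. -/
def frobC {n : ℕ} (A : Matrix (Fin n) (Fin n) ℂ) : ℝ :=
  Real.sqrt (∑ i, ∑ j, ‖A i j‖ ^ 2)

/-- Integral of a real function over `s` against a finite signed measure
(via the Jordan decomposition). -/
def sIntOn (μ : SignedMeasure ℝ) (s : Set ℝ) (f : ℝ → ℝ) : ℝ :=
  (∫ t in s, f t ∂μ.toJordanDecomposition.posPart) -
    ∫ t in s, f t ∂μ.toJordanDecomposition.negPart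

/-- Integral of a complex function over `s` against a finite signed measure. -/
def sIntOnC (μ : SignedMeasure ℝ) (s : Set ℝ) (f : ℝ → ℂ) : ℂ :=
  (∫ t in s, f t ∂μ.toJordanDecomposition.posPart) -
    ∫ t in s, f t ∂μ.toJordanDecomposition.negPart

/-- The signed matrix measure `η` is supported on `[0,∞)`. -/
def SuppNonneg {n : ℕ} (η : Matrix (Fin n) (Fin n) (SignedMeasure ℝ)) : Prop :=
  ∀ i j, (η i j).totalVariation (Set.Iio 0) = 0

/-- `η` has a `δ`-exponential moment: `∫ e^{δ t} |η_ij|(dt) < ∞`. -/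
def ExpMoment {n : ℕ} (δ : ℝ) (η : Matrix (Fin n) (Fin n) (SignedMeasure ℝ)) : Prop :=
  ∀ i j, (∫⁻ t, ENNReal.ofReal (Real.exp (δ * t)) ∂(η i j).totalVariation) < ⊤

/-- The Laplace transform `L[η](z)`, an `n × n` complex matrix. -/
def lapM {n : ℕ} (η : Matrix (Fin n) (Fin n) (SignedMeasure ℝ)) (z : ℂ) :
    Matrix (Fin n) (Fin n) ℂ :=
  Matrix.of fun i j => sIntOnC (η i j) (Set.Ici 0) fun t => Complex.exp (-z * t)

/-- `h_η(z) = z Iₙ − L[η](z)`. -/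
def hEta {n : ℕ} (η : Matrix (Fin n) (Fin n) (SignedMeasure ℝ)) (z : ℂ) :
    Matrix (Fin n) (Fin n) ℂ :=
  z • (1 : Matrix (Fin n) (Fin n) ℂ) - lapM η z

/-- `Π₀ = η([0,∞))`. -/
def Pi0 {n : ℕ} (η : Matrix (Fin n) (Fin n) (SignedMeasure ℝ)) : Matrix (Fin n) (Fin n) ℝ :=
  Matrix.of fun i j => η i j (Set.Ici 0)

/-- `π(t) = η([0,t]) − η([0,∞))`. -/
def piFun {n : ℕ} (η : Matrix (Fin n) (Fin n) (SignedMeasure ℝ)) (t : ℝ) :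
    Matrix (Fin n) (Fin n) ℝ :=
  Matrix.of fun i j => η i j (Set.Icc 0 t) - η i j (Set.Ici 0)

/-- `Π([0,∞)) = ∫_0^∞ π(t) dt`. -/
def PiInf {n : ℕ} (η : Matrix (Fin n) (Fin n) (SignedMeasure ℝ)) : Matrix (Fin n) (Fin n) ℝ :=
  Matrix.of fun i j => ∫ t in Set.Ioi (0 : ℝ), piFun η t i j

/-- Condition (C): `det h_η(z) ≠ 0` on `ℍ_δ \ {0}`, and `G` is an analytic extension of
`z ↦ z • h_η(z)⁻¹` to all of `ℍ_δ`. -/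
def CondC {n : ℕ} (δ : ℝ) (η : Matrix (Fin n) (Fin n) (SignedMeasure ℝ))
    (G : ℂ → Matrix (Fin n) (Fin n) ℂ) : Prop :=
  (∀ z : ℂ, -δ < z.re → z ≠ 0 → (hEta η z).det ≠ 0) ∧
  (∀ i j, DifferentiableOn ℂ (fun z => G z i j) {z : ℂ | -δ < z.re}) ∧
  ∀ z : ℂ, -δ < z.re → z ≠ 0 → G z = z • (hEta η z)⁻¹

/-- The process `Z` has stationary increments (equality of all finite-dimensional
distributions of the increment processes). -/
def StatInc {n : ℕ} {Ω : Type} [MeasurableSpace Ω] (P : Measure Ω)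
    (Z : ℝ → Ω → Fin n → ℝ) : Prop :=
  ∀ (h : ℝ) (k : ℕ) (ts : Fin k → ℝ),
    Measure.map (fun ω (m : Fin k) => Z (ts m + h) ω - Z h ω) P =
      Measure.map (fun ω (m : Fin k) => Z (ts m) ω - Z 0 ω) P

/-- The pair `(X, Z)` has stationary increments. -/
def PairStatInc {n : ℕ} {Ω : Type} [MeasurableSpace Ω] (P : Measure Ω)
    (X Z : ℝ → Ω → Fin n → ℝ) : Prop :=
  ∀ (h : ℝ) (k : ℕ) (ts : Fin k → ℝ),
    Measure.map (fun ω (m : Fin k) =>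
        (X (ts m + h) ω - X h ω, Z (ts m + h) ω - Z h ω)) P =
      Measure.map (fun ω (m : Fin k) => (X (ts m) ω - X 0 ω, Z (ts m) ω - Z 0 ω)) P

/-- The driving noise: measurable, `Z_0 = 0`, stationary increments,
square-integrable marginals. -/
def GoodNoise {n : ℕ} {Ω : Type} [MeasurableSpace Ω] (P : Measure Ω)
    (Z : ℝ → Ω → Fin n → ℝ) : Prop :=
  Measurable (Function.uncurry Z) ∧ (∀ ω, Z 0 ω = 0) ∧ StatInc P Z ∧
    ∀ t, Integrable (fun ω => euclNorm (Z t ω) ^ 2) P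

/-- `X` is a solution of the MSDDE `dX_t = η ∗ X(t) dt + dZ_t`. -/
def IsMSDDESolution {n : ℕ} {Ω : Type} [MeasurableSpace Ω] (P : Measure Ω)
    (η : Matrix (Fin n) (Fin n) (SignedMeasure ℝ)) (Z X : ℝ → Ω → Fin n → ℝ) : Prop :=
  Measurable (Function.uncurry X) ∧
  (∀ t, Integrable (fun ω => euclNorm (X t ω) ^ 2) P) ∧
  PairStatInc P X Z ∧
  ∀ s t : ℝ, s < t → ∀ i, ∀ᵐ ω ∂P,
    X t ω i - X s ω i =
      (∑ j, ∫ u in s..t, sIntOn (η i j) (Set.Ici 0) fun v => X (u - v) ω j) +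
        (Z t ω i - Z s ω i)

/-- Specification of the kernel `f` from the Granger-type representation theorem:
vanishing on negatives, exponentially decaying, with Laplace transform
`Iₙ − z h_η(z)⁻¹` (via the analytic extension `G`). -/
def FSpec {n : ℕ} (δ : ℝ) (G : ℂ → Matrix (Fin n) (Fin n) ℂ)
    (f : ℝ → Matrix (Fin n) (Fin n) ℝ) : Prop :=
  (∀ i j, Measurable fun t => f t i j) ∧ (∀ t < (0 : ℝ), f t = 0) ∧
  (∀ ε, 0 < ε → ε < δ → ∃ M, ∀ t, 0 ≤ t → Real.exp (ε * t) * frobR (f t) ≤ M) ∧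
  ∀ z : ℂ, -δ < z.re → ∀ i j,
    (∫ t in Set.Ici (0 : ℝ), Complex.exp (-z * t) * (f t i j : ℂ)) =
      ((1 : Matrix (Fin n) (Fin n) ℂ) - G z) i j

/-- `f_r = 1_{[0,∞)}(· − r) − 1_{[0,∞)}`. -/
def frFun (r x : ℝ) : ℝ :=
  Set.indicator (Set.Ici r) (fun _ => (1 : ℝ)) x - Set.indicator (Set.Ici 0) (fun _ => (1 : ℝ)) x

/-- `I` is an integration map (regular integrator) for the one-dimensional noise `Zi`. -/
def IsRegIntegrator {Ω : Type} [MeasurableSpace Ω] (P : Measure Ω) (Zi : ℝ → Ω → ℝ)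
    (I : (ℝ → ℝ) → Ω → ℝ) : Prop :=
  (∀ f : ℝ → ℝ, Integrable f volume → MemLp f 2 volume → Integrable (I f) P) ∧
  (∀ f g : ℝ → ℝ, Integrable f volume → MemLp f 2 volume → Integrable g volume →
    MemLp g 2 volume → I (f + g) =ᵐ[P] I f + I g) ∧
  (∀ (c : ℝ) (f : ℝ → ℝ), Integrable f volume → MemLp f 2 volume →
    I (c • f) =ᵐ[P] c • I f) ∧
  (∀ s t : ℝ, s < t →
    I (Set.indicator (Set.Ioc s t) fun _ => (1 : ℝ)) =ᵐ[P] fun ω => Zi t ω - Zi s ω) ∧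
  (∀ (μ : Measure ℝ) [IsFiniteMeasure μ], Integrable (fun r => |r|) μ → ∀ t : ℝ,
    ∀ᵐ ω ∂P, Integrable (fun r => I (fun s => frFun r (t - s)) ω) μ ∧
      I (fun s => ∫ r, frFun r (t - s) ∂μ) ω = ∫ r, I (fun s => frFun r (t - s)) ω ∂μ)

/-- The matrix polynomial `z ↦ Σ_{k=0}^{p} z^{p−k} • c_k` (complexified), where
`c 0` is the leading coefficient. -/
def polyMat {n : ℕ} (p : ℕ) (c : ℕ → Matrix (Fin n) (Fin n) ℝ) (z : ℂ) :
    Matrix (Fin n) (Fin n) ℂ :=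
  ∑ k ∈ Finset.range (p + 1), z ^ (p - k) • (c k).map Complex.ofReal

/-!
Since `P₀ = Q₀ = Iₙ` and `η₀ = Q₁ − P₁`, the coefficients of `z ^ p` and `z ^ (p - 1)` in
`Q(z) (z Iₙ − η₀) − P(z)` cancel, which is (1). Writing `Q(z) = z ^ (p - 1) Q̃(1 / z)` with the
reversed polynomial `Q̃` continuous and `Q̃(0) = Iₙ` gives `‖Q(z)⁻¹‖ = O(|z| ^ (1 - p))`, so
`z Iₙ − η₀ − Q(z)⁻¹ P(z) = Q(z)⁻¹ (Q(z) (z Iₙ − η₀) − P(z))` is `O(1 / |z|)` at infinity.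
Being continuous on the closed half-plane `Re z ≥ −ε`, it satisfies `(1 + |z|) ‖·‖ ≤ K` there,
so each integral in (2) is at most `∫ K² / (1 + y²) dy = π K²`.
-/

open Filter Topology Asymptotics Bornology Finset
open scoped Matrix.Norms.Frobenius

lemma isBigO_smul_sum_range_pow_smul_cobounded {𝕜 E : Type*} [NormedField 𝕜]
    [SeminormedAddCommGroup E] [NormedSpace 𝕜 E] (m : ℕ) (R : ℕ → E) :
    (fun z : 𝕜 => z • ∑ k ∈ range m, z ^ k • R k) =O[cobounded 𝕜] (· ^ m) := by
  simp_rw [smul_sum, smul_smul, ← pow_succ']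
  refine IsBigO.fun_sum fun k hk => ?_
  simpa using (isBigO_pow_pow_cobounded_of_le (mem_range.mp hk)).smul
    (isBigO_const_const (R k) (one_ne_zero (α := 𝕜)) (cobounded 𝕜))

lemma exists_forall_le_of_continuousOn_of_eventually_le {E : Type*} [NormedAddCommGroup E]
    [ProperSpace E] {S : Set E} (hS : IsClosed S) {f : E → ℝ} (hf : ContinuousOn f S) {C : ℝ}
    (hC : ∀ᶠ z in cobounded E, z ∈ S → f z ≤ C) : ∃ K, ∀ z ∈ S, f z ≤ K := by
  obtain ⟨R, -, hR⟩ := hasBasis_cobounded_norm.eventually_iff.mp hC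
  obtain ⟨B, hB⟩ := ((isCompact_closedBall 0 R).inter_right hS).bddAbove_image
    (hf.mono inter_subset_right)
  refine ⟨max B C, fun z hz => ?_⟩
  rcases le_total R ‖z‖ with h | h
  · exact (hR h hz).trans (le_max_right _ _)
  · exact (hB ⟨z, ⟨mem_closedBall_zero_iff.mpr h, hz⟩, rfl⟩).trans (le_max_left _ _)

lemma sq_le_mul_inv_one_add_sq {a y K : ℝ} (ha : 0 ≤ a) (h : (1 + |y|) * a ≤ K) :
    a ^ 2 ≤ K ^ 2 * (1 + y ^ 2)⁻¹ := by
  rw [← div_eq_mul_inv, le_div_iff₀ (by positivity)]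
  calc a ^ 2 * (1 + y ^ 2) ≤ ((1 + |y|) * a) ^ 2 := by nlinarith [abs_nonneg y, sq_abs y]
    _ ≤ K ^ 2 := pow_le_pow_left₀ (by positivity) h 2

lemma integrable_norm_sq_and_integral_le {E : Type*} [NormedAddCommGroup E] {f : ℝ → E}
    (hf : Continuous f) {K : ℝ} (hK : ∀ y, (1 + |y|) * ‖f y‖ ≤ K) :
    Integrable (fun y => ‖f y‖ ^ 2) ∧ ∫ y, ‖f y‖ ^ 2 ≤ K ^ 2 * Real.pi := by
  have hpt (y : ℝ) : ‖f y‖ ^ 2 ≤ K ^ 2 * (1 + y ^ 2)⁻¹ :=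
    sq_le_mul_inv_one_add_sq (norm_nonneg _) (hK y)
  have hmaj : Integrable fun y : ℝ => K ^ 2 * (1 + y ^ 2)⁻¹ :=
    integrable_inv_one_add_sq.const_mul _
  have hint : Integrable fun y => ‖f y‖ ^ 2 :=
    hmaj.mono' (hf.norm.pow 2).aestronglyMeasurable
      (ae_of_all _ fun y => by rw [Real.norm_of_nonneg (by positivity)]; exact hpt y)
  refine ⟨hint, ?_⟩
  calc ∫ y, ‖f y‖ ^ 2 ≤ ∫ y : ℝ, K ^ 2 * (1 + y ^ 2)⁻¹ := integral_mono hint hmaj hpt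
    _ = K ^ 2 * Real.pi := by rw [integral_const_mul, integral_univ_inv_one_add_sq]

section MatrixPolynomial

variable {n : ℕ}

lemma frobC_eq_norm (A : Matrix (Fin n) (Fin n) ℂ) : frobC A = ‖A‖ := by
  rw [frobC, Matrix.frobenius_norm_def, Real.sqrt_eq_rpow]
  norm_cast

lemma continuous_polyMat (q : ℕ) (c : ℕ → Matrix (Fin n) (Fin n) ℝ) :
    Continuous (polyMat q c) := by
  unfold polyMat
  fun_prop

lemma polyMat_succ (q : ℕ) (c : ℕ → Matrix (Fin n) (Fin n) ℝ) (z : ℂ) :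
    polyMat (q + 1) c z = z • polyMat q c z + (c (q + 1)).map ofReal := by
  rw [polyMat, sum_range_succ, Nat.sub_self, pow_zero, one_smul, polyMat, smul_sum]
  congr 1
  refine sum_congr rfl fun k hk => ?_
  rw [smul_smul, ← pow_succ', Nat.sub_add_comm (Nat.lt_succ_iff.mp (mem_range.mp hk))]

lemma polyMat_succ_of_eq_zero {q : ℕ} {c : ℕ → Matrix (Fin n) (Fin n) ℝ} (hc : c 0 = 0)
    (z : ℂ) : polyMat (q + 1) c z = polyMat q (fun k => c (k + 1)) z := by
  rw [polyMat, sum_range_succ', hc, Matrix.map_zero _ ofReal_zero, smul_zero, add_zero]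
  simp only [polyMat, Nat.add_sub_add_right]

lemma polyMat_sub (q : ℕ) (c d : ℕ → Matrix (Fin n) (Fin n) ℝ) (z : ℂ) :
    polyMat q (c - d) z = polyMat q c z - polyMat q d z := by
  simp only [polyMat, Pi.sub_apply, ← sum_sub_distrib, ← smul_sub]
  congr! 2
  ext
  simp

lemma polyMat_mul_map (q : ℕ) (c : ℕ → Matrix (Fin n) (Fin n) ℝ) (B : Matrix (Fin n) (Fin n) ℝ)
    (z : ℂ) : polyMat q c z * B.map ofReal = polyMat q (fun k => c k * B) z := by
  simp only [polyMat, sum_mul, Matrix.smul_mul]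
  congr! 2 with k
  exact (Matrix.map_mul (f := ofRealHom)).symm

lemma polyMat_eq_sum_range_of_eq_zero {q : ℕ} {c : ℕ → Matrix (Fin n) (Fin n) ℝ} (hc : c 0 = 0)
    (z : ℂ) : polyMat q c z = ∑ k ∈ range q, z ^ k • (c (q - k)).map ofReal := by
  cases q with
  | zero => simp [polyMat, hc]
  | succ q =>
    rw [polyMat_succ_of_eq_zero hc, polyMat, ← sum_range_reflect]
    refine sum_congr rfl fun k hk => ?_
    have hk : k ≤ q := Nat.lt_succ_iff.mp (mem_range.mp hk)
    rw [Nat.add_sub_cancel, Nat.sub_sub_self hk, Nat.sub_add_comm hk]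

def revPolyMat (q : ℕ) (c : ℕ → Matrix (Fin n) (Fin n) ℝ) (w : ℂ) : Matrix (Fin n) (Fin n) ℂ :=
  ∑ k ∈ range (q + 1), w ^ k • (c k).map ofReal

lemma polyMat_eq_pow_smul_revPolyMat (q : ℕ) (c : ℕ → Matrix (Fin n) (Fin n) ℝ) {z : ℂ}
    (hz : z ≠ 0) : polyMat q c z = z ^ q • revPolyMat q c z⁻¹ := by
  rw [polyMat, revPolyMat, smul_sum]
  refine sum_congr rfl fun k hk => ?_
  rw [smul_smul, inv_pow, ← pow_sub₀ z hz (Nat.lt_succ_iff.mp (mem_range.mp hk))]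

lemma tendsto_revPolyMat_inv_cobounded (q : ℕ) (c : ℕ → Matrix (Fin n) (Fin n) ℝ) :
    Tendsto (fun z => revPolyMat q c z⁻¹) (cobounded ℂ) (𝓝 ((c 0).map ofReal)) := by
  have hcont : Continuous (revPolyMat q c) := by
    unfold revPolyMat
    fun_prop
  have hzero : revPolyMat q c 0 = (c 0).map ofReal := by
    simp [revPolyMat, sum_range_succ']
  rw [← hzero]
  exact (hcont.tendsto 0).comp tendsto_inv₀_cobounded

lemma isBigO_smul_inv_mul_cobounded {m : ℕ} {Q E D : ℂ → Matrix (Fin n) (Fin n) ℂ}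
    (hQ : ∀ z ≠ 0, Q z = z ^ m • E z) (hE : Tendsto E (cobounded ℂ) (𝓝 1))
    (hD : (fun z => z • D z) =O[cobounded ℂ] (· ^ m)) :
    (fun z => z • ((Q z)⁻¹ * D z)) =O[cobounded ℂ] (fun _ => (1 : ℝ)) := by
  have hEinv : (fun z => (E z)⁻¹) =O[cobounded ℂ] (fun _ => (1 : ℝ)) := by
    have hinv : ContinuousAt Inv.inv (1 : Matrix (Fin n) (Fin n) ℂ) :=
      continuousAt_matrix_inv 1 (by
        rw [det_one, Ring.inverse_eq_inv']
        exact continuousAt_inv₀ one_ne_zero)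
    exact (hinv.tendsto.comp hE).isBigO_one ℝ
  have hdet : ∀ᶠ z in cobounded ℂ, IsUnit (E z).det := by
    have hlim := (continuous_id.matrix_det.tendsto 1).comp hE
    rw [id, det_one] at hlim
    exact (hlim.eventually_ne one_ne_zero).mono fun z hz => isUnit_iff_ne_zero.mpr hz
  have hscaled : (fun z => (z ^ m)⁻¹ • (z • D z)) =O[cobounded ℂ] (fun _ => (1 : ℝ)) := by
    refine ((isBigO_refl (fun z : ℂ => (z ^ m)⁻¹) _).smul hD).trans_eventuallyEq ?_ |>.trans
      (isBigO_const_const (1 : ℂ) one_ne_zero _)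
    filter_upwards [eventually_ne_cobounded 0] with z hz
    exact inv_mul_cancel₀ (pow_ne_zero m hz)
  refine (hEinv.mul hscaled).congr' ?_ (Eventually.of_forall fun _ => mul_one 1)
  filter_upwards [hdet, eventually_ne_cobounded 0] with z hdetz hz
  have hinv_smul : (z ^ m • E z)⁻¹ = (z ^ m)⁻¹ • (E z)⁻¹ := by
    simpa [Units.smul_def] using Matrix.inv_smul' (E z) (Units.mk0 (z ^ m) (pow_ne_zero m hz)) hdetz
  rw [hQ z hz, hinv_smul, Matrix.smul_mul, Matrix.mul_smul, Matrix.mul_smul, smul_comm]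

end MatrixPolynomial

section Residual

variable {n : ℕ} (Pc Qc : ℕ → Matrix (Fin n) (Fin n) ℝ)

def residualMat (p : ℕ) (z : ℂ) : Matrix (Fin n) (Fin n) ℂ :=
  z • (1 : Matrix (Fin n) (Fin n) ℂ) - (Qc 1 - Pc 1).map ofReal -
    (polyMat (p - 1) Qc z)⁻¹ * polyMat p Pc z

/-- The coefficient of `z ^ (p - 1 - k)` in `Q(z) (z Iₙ − η₀) − P(z)`. -/
def defectCoeff (k : ℕ) : Matrix (Fin n) (Fin n) ℝ :=
  Qc (k + 1) - Pc (k + 1) - Qc k * (Qc 1 - Pc 1)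

variable {Pc Qc} {p : ℕ}

lemma polyMat_mul_sub_eq_sum (hp : 1 ≤ p) (hP0 : Pc 0 = 1) (hQ0 : Qc 0 = 1) (hQp : Qc p = 0)
    (z : ℂ) :
    polyMat (p - 1) Qc z * (z • (1 : Matrix (Fin n) (Fin n) ℂ) - (Qc 1 - Pc 1).map ofReal) -
        polyMat p Pc z =
      ∑ k ∈ range (p - 1), z ^ k • (defectCoeff Pc Qc (p - 1 - k)).map ofReal := by
  obtain ⟨q, rfl⟩ : ∃ q, p = q + 1 := ⟨p - 1, by omega⟩
  have hzQ : z • polyMat q Qc z = polyMat (q + 1) Qc z := by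
    rw [polyMat_succ, hQp, Matrix.map_zero _ ofReal_zero, add_zero]
  have hlead : (Qc - Pc) 0 = 0 := by simp [hP0, hQ0]
  have hdefect : defectCoeff Pc Qc 0 = 0 := by simp [defectCoeff, hQ0]
  rw [Nat.add_sub_cancel, ← polyMat_eq_sum_range_of_eq_zero hdefect, mul_sub, Matrix.mul_smul,
    Matrix.mul_one, hzQ, sub_right_comm, ← polyMat_sub, polyMat_succ_of_eq_zero hlead,
    polyMat_mul_map, ← polyMat_sub]
  rfl

lemma residualMat_eq_inv_mul {z : ℂ} (hz : (polyMat (p - 1) Qc z).det ≠ 0) :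
    residualMat Pc Qc p z = (polyMat (p - 1) Qc z)⁻¹ *
      (polyMat (p - 1) Qc z * (z • (1 : Matrix (Fin n) (Fin n) ℂ) - (Qc 1 - Pc 1).map ofReal) -
        polyMat p Pc z) := by
  rw [residualMat, Matrix.mul_sub, ← Matrix.mul_assoc,
    Matrix.nonsing_inv_mul _ (isUnit_iff_ne_zero.mpr hz), Matrix.one_mul]

lemma continuousAt_residualMat {z : ℂ} (hz : (polyMat (p - 1) Qc z).det ≠ 0) :
    ContinuousAt (residualMat Pc Qc p) z := by
  have hinv : ContinuousAt (fun w => (polyMat (p - 1) Qc w)⁻¹) z :=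
    (continuousAt_matrix_inv _ (by rw [Ring.inverse_eq_inv']; exact continuousAt_inv₀ hz)).comp
      (continuous_polyMat _ _).continuousAt
  exact ((continuous_id.smul continuous_const).continuousAt.sub continuousAt_const).sub
    (hinv.mul (continuous_polyMat _ _).continuousAt)

lemma exists_bound_residualMat (hp : 1 ≤ p) (hP0 : Pc 0 = 1) (hQ0 : Qc 0 = 1) (hQp : Qc p = 0)
    {ε : ℝ} (hQ : ∀ z : ℂ, -ε ≤ z.re → (polyMat (p - 1) Qc z).det ≠ 0) :
    ∃ K, ∀ z : ℂ, -ε ≤ z.re → (1 + ‖z‖) * ‖residualMat Pc Qc p z‖ ≤ K := by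
  have hO := isBigO_smul_inv_mul_cobounded (m := p - 1) (Q := polyMat (p - 1) Qc)
    (D := fun z => ∑ k ∈ range (p - 1), z ^ k • (defectCoeff Pc Qc (p - 1 - k)).map ofReal)
    (fun z hz => polyMat_eq_pow_smul_revPolyMat _ _ hz)
    (by simpa [hQ0] using tendsto_revPolyMat_inv_cobounded (p - 1) Qc)
    (isBigO_smul_sum_range_pow_smul_cobounded _ _)
  obtain ⟨C, hC⟩ := hO.bound
  refine exists_forall_le_of_continuousOn_of_eventually_le (C := 2 * C)
    (isClosed_le continuous_const continuous_re) (fun z hz => ?_) ?_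
  · exact ((continuous_const.add continuous_norm).continuousAt.mul
      (continuousAt_residualMat (hQ z hz)).norm).continuousWithinAt
  · filter_upwards [hC, eventually_cobounded_le_norm 1] with z hzC hz1 hzS
    rw [← polyMat_mul_sub_eq_sum hp hP0 hQ0 hQp, ← residualMat_eq_inv_mul (hQ z hzS), norm_smul,
      norm_one, mul_one] at hzC
    nlinarith [norm_nonneg (residualMat Pc Qc p z)]

end Residual

theorem statement18_general {n p : ℕ} (hp : 1 ≤ p)
    (Pc Qc : ℕ → Matrix (Fin n) (Fin n) ℝ) (hP0 : Pc 0 = 1) (hQ0 : Qc 0 = 1)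
    (hQtop : ∀ k, p ≤ k → Qc k = 0)
    (ε : ℝ)
    (hQ : ∀ z : ℂ, -ε ≤ z.re → (polyMat (p - 1) Qc z).det ≠ 0) :
    (∃ R : ℕ → Matrix (Fin n) (Fin n) ℂ,
      ∀ z : ℂ,
        polyMat (p - 1) Qc z *
            (z • (1 : Matrix (Fin n) (Fin n) ℂ) - ((Qc 1 - Pc 1).map Complex.ofReal)) -
          polyMat p Pc z = ∑ k ∈ Finset.range (p - 1), z ^ k • R k) ∧
    ((∀ x : ℝ, -ε < x → Integrable (fun y : ℝ =>
        frobC (((x : ℂ) + (y : ℂ) * Complex.I) • (1 : Matrix (Fin n) (Fin n) ℂ) -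
          ((Qc 1 - Pc 1).map Complex.ofReal) -
          (polyMat (p - 1) Qc ((x : ℂ) + (y : ℂ) * Complex.I))⁻¹ *
            polyMat p Pc ((x : ℂ) + (y : ℂ) * Complex.I)) ^ 2) volume) ∧
      ∃ M : ℝ, ∀ x : ℝ, -ε < x →
        (∫ y : ℝ, frobC (((x : ℂ) + (y : ℂ) * Complex.I) • (1 : Matrix (Fin n) (Fin n) ℂ) -
          ((Qc 1 - Pc 1).map Complex.ofReal) -
          (polyMat (p - 1) Qc ((x : ℂ) + (y : ℂ) * Complex.I))⁻¹ *
            polyMat p Pc ((x : ℂ) + (y : ℂ) * Complex.I)) ^ 2) ≤ M) := by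
  have hQp : Qc p = 0 := hQtop p le_rfl
  refine ⟨⟨_, polyMat_mul_sub_eq_sum hp hP0 hQ0 hQp⟩, ?_⟩
  obtain ⟨K, hK⟩ := exists_bound_residualMat hp hP0 hQ0 hQp hQ
  have hline (x : ℝ) (hx : -ε < x) :
      Integrable (fun y : ℝ => ‖residualMat Pc Qc p (x + y * I)‖ ^ 2) ∧
        ∫ y : ℝ, ‖residualMat Pc Qc p (x + y * I)‖ ^ 2 ≤ K ^ 2 * Real.pi := by
    have hS (y : ℝ) : -ε ≤ ((x : ℂ) + y * I).re := by simpa using hx.le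
    refine integrable_norm_sq_and_integral_le (continuous_iff_continuousAt.mpr fun y =>
      (continuousAt_residualMat (hQ _ (hS y))).comp
        (f := fun y : ℝ => (x : ℂ) + y * I) (by fun_prop)) fun y => ?_
    calc (1 + |y|) * ‖residualMat Pc Qc p (x + y * I)‖
        ≤ (1 + ‖(x : ℂ) + y * I‖) * ‖residualMat Pc Qc p (x + y * I)‖ := by
          gcongr
          simpa using abs_im_le_norm ((x : ℂ) + y * I)
      _ ≤ K := hK _ (hS y)
  simp only [frobC_eq_norm]
  exact ⟨fun x hx => (hline x hx).1, K ^ 2 * Real.pi, fun x hx => (hline x hx).2⟩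

/-- If `det Q(z) ≠ 0` on `{Re z ≥ −ε}`, then
`z ↦ Q(z)(z Iₙ − η₀) − P(z)` has degree at most `p − 2`, and
`sup_{x > −ε} ∫_ℝ ‖z Iₙ − η₀ − Q(z)⁻¹P(z)‖² dy < ∞` (with `z = x + iy`),
where `η₀ = Q₁ − P₁`. -/
theorem statement18 {n p : ℕ} (hn : 1 ≤ n) (hp : 1 ≤ p)
    (Pc Qc : ℕ → Matrix (Fin n) (Fin n) ℝ) (hP0 : Pc 0 = 1) (hQ0 : Qc 0 = 1)
    (hQtop : ∀ k, p ≤ k → Qc k = 0)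
    (ε : ℝ) (hε : 0 < ε)
    (hQ : ∀ z : ℂ, -ε ≤ z.re → (polyMat (p - 1) Qc z).det ≠ 0) :
    (∃ R : ℕ → Matrix (Fin n) (Fin n) ℂ,
      ∀ z : ℂ,
        polyMat (p - 1) Qc z *
            (z • (1 : Matrix (Fin n) (Fin n) ℂ) - ((Qc 1 - Pc 1).map Complex.ofReal)) -
          polyMat p Pc z = ∑ k ∈ Finset.range (p - 1), z ^ k • R k) ∧
    ((∀ x : ℝ, -ε < x → Integrable (fun y : ℝ =>
        frobC (((x : ℂ) + (y : ℂ) * Complex.I) • (1 : Matrix (Fin n) (Fin n) ℂ) -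
          ((Qc 1 - Pc 1).map Complex.ofReal) -
          (polyMat (p - 1) Qc ((x : ℂ) + (y : ℂ) * Complex.I))⁻¹ *
            polyMat p Pc ((x : ℂ) + (y : ℂ) * Complex.I)) ^ 2) volume) ∧
      ∃ M : ℝ, ∀ x : ℝ, -ε < x →
        (∫ y : ℝ, frobC (((x : ℂ) + (y : ℂ) * Complex.I) • (1 : Matrix (Fin n) (Fin n) ℂ) -
          ((Qc 1 - Pc 1).map Complex.ofReal) -
          (polyMat (p - 1) Qc ((x : ℂ) + (y : ℂ) * Complex.I))⁻¹ *
            polyMat p Pc ((x : ℂ) + (y : ℂ) * Complex.I)) ^ 2) ≤ M) :=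
  statement18_general hp Pc Qc hP0 hQ0 hQtop ε hQ
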